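/- arXiv:1103.5937 — 2 statements merged into one kernel-verified Lean document; each statement's English description precedes it below -/
import Mathlib

section
/- Twisted multiplicativity of Kloosterman sums: if c₁ and c₂ are coprime positive integers, then S(n, m; c₁c₂) = S(n·c̄₂, m·c̄₂; c₁) · S(n·c̄₁, m·c̄₁; c₂), where c̄₂ is an inverse of c₂ modulo c₁ and c̄₁ is an inverse of c₁ modulo c₂. -/
open Complex Finset

/-- `e(x) = exp(2πix)`. -/
noncomputable def e (x : ℝ) : ℂ := Complex.exp (2 * Real.pi * Complex.I * x)

/-- Additive character `x ↦ e(x/c)` on `ZMod c`. -/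
noncomputable def eZMod (c : ℕ) [NeZero c] (x : ZMod c) : ℂ := e ((x.val : ℝ) / c)

/-- Kloosterman sum `S(n,m;c) = ∑*_{h mod c} e((nh + m·h̄)/c)`. -/
noncomputable def kloos (c : ℕ) [NeZero c] (n m : ℤ) : ℂ :=
  ∑ h : (ZMod c)ˣ,
    eZMod c ((n : ZMod c) * (h : ZMod c) + (m : ZMod c) * ((h⁻¹ : (ZMod c)ˣ) : ZMod c))

/-!
By the Chinese remainder theorem, `h ↦ (h mod c₁, h mod c₂)` is a bijection between the units
modulo `c₁c₂` and pairs of units modulo `c₁` and `c₂`. The additive character modulo `c₁c₂`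
splits accordingly, since `1/(c₁c₂) ≡ c̄₂/c₁ + c̄₁/c₂ (mod 1)`: indeed `c₁c₂` divides
`(c₂c̄₂ - 1)(c₁c̄₁ - 1) ≡ 1 - c₂c̄₂ - c₁c̄₁ (mod c₁c₂)`. Hence each term of `S(n, m; c₁c₂)` is the
product of the corresponding terms of the two smaller sums, and the sum over pairs factors.
-/

theorem e_add (x y : ℝ) : e (x + y) = e x * e y := by
  simp only [e, ofReal_add, mul_add, Complex.exp_add]

theorem e_intCast (k : ℤ) : e k = 1 := by
  rw [e, show 2 * (Real.pi : ℂ) * I * ((k : ℝ) : ℂ) = k * (2 * Real.pi * I) by push_cast; ring]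
  exact Complex.exp_int_mul_two_pi_mul_I k

theorem e_add_intCast (x : ℝ) (k : ℤ) : e (x + k) = e x := by
  rw [e_add, e_intCast, mul_one]

theorem eZMod_intCast (c : ℕ) [NeZero c] (x : ℤ) : eZMod c x = e (x / c) := by
  have hc : (c : ℝ) ≠ 0 := Nat.cast_ne_zero.mpr (NeZero.ne c)
  have hval : ((x : ZMod c).val : ℝ) = x - c * ((x / (c : ℤ) : ℤ) : ℝ) := by
    exact_mod_cast (ZMod.val_intCast x).trans (Int.emod_def x c)
  have : (x : ℝ) / c = ((x : ZMod c).val : ℝ) / c + (x / (c : ℤ) : ℤ) := by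
    rw [hval]; field_simp; ring
  rw [eZMod, this, e_add_intCast]

theorem eZMod_mul_eq_mul_eZMod (c₁ c₂ : ℕ) [NeZero c₁] [NeZero c₂] (c1bar c2bar : ℤ)
    (h1 : (c₂ : ℤ) ∣ c₁ * c1bar - 1) (h2 : (c₁ : ℤ) ∣ c₂ * c2bar - 1) (x : ZMod (c₁ * c₂)) :
    eZMod (c₁ * c₂) x
      = eZMod c₁ (c2bar * ZMod.cast x) * eZMod c₂ (c1bar * ZMod.cast x) := by
  obtain ⟨a, rfl⟩ := ZMod.intCast_surjective x
  obtain ⟨j, hj⟩ := mul_dvd_mul h2 h1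
  have hc₁ : (c₁ : ℝ) ≠ 0 := Nat.cast_ne_zero.mpr (NeZero.ne c₁)
  have hc₂ : (c₂ : ℝ) ≠ 0 := Nat.cast_ne_zero.mpr (NeZero.ne c₂)
  have hjR : ((c₂ * c2bar - 1) * (c₁ * c1bar - 1) : ℝ) = c₁ * c₂ * j := by exact_mod_cast hj
  have hsplit : ((c2bar * a : ℤ) : ℝ) / c₁ + ((c1bar * a : ℤ) : ℝ) / c₂
      = (a : ℝ) / ((c₁ * c₂ : ℕ) : ℝ) + (a * (c1bar * c2bar - j) : ℤ) := by
    field_simp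
    push_cast
    linear_combination (-(a * c₁ * c₂ : ℝ)) * hjR
  rw [ZMod.cast_intCast (dvd_mul_right c₁ c₂), ZMod.cast_intCast (dvd_mul_left c₂ c₁),
    ← Int.cast_mul, ← Int.cast_mul, eZMod_intCast, eZMod_intCast, eZMod_intCast, ← e_add, hsplit,
    e_add_intCast]

namespace ZMod

variable {c₁ c₂ : ℕ}

def unitsChineseRemainder (hco : c₁.Coprime c₂) : (ZMod (c₁ * c₂))ˣ ≃* (ZMod c₁)ˣ × (ZMod c₂)ˣ :=
  (Units.mapEquiv (chineseRemainder hco).toMulEquiv).trans MulEquiv.prodUnits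

@[simp]
theorem coe_unitsChineseRemainder_fst (hco : c₁.Coprime c₂) (h : (ZMod (c₁ * c₂))ˣ) :
    ((unitsChineseRemainder hco h).1 : ZMod c₁) = cast (h : ZMod (c₁ * c₂)) := by
  simp [unitsChineseRemainder, chineseRemainder, MulEquiv.prodUnits, Units.mapEquiv]

@[simp]
theorem coe_unitsChineseRemainder_snd (hco : c₁.Coprime c₂) (h : (ZMod (c₁ * c₂))ˣ) :
    ((unitsChineseRemainder hco h).2 : ZMod c₂) = cast (h : ZMod (c₁ * c₂)) := by
  simp [unitsChineseRemainder, chineseRemainder, MulEquiv.prodUnits, Units.mapEquiv]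

theorem sum_units_mul_eq_sum_mul_sum {R : Type*} [CommSemiring R] [NeZero c₁] [NeZero c₂]
    (hco : c₁.Coprime c₂)
    (f : (ZMod c₁)ˣ → R) (g : (ZMod c₂)ˣ → R) :
    ∑ h : (ZMod (c₁ * c₂))ˣ, f (unitsChineseRemainder hco h).1 * g (unitsChineseRemainder hco h).2
      = (∑ u, f u) * ∑ v, g v := by
  rw [sum_mul_sum, ← Fintype.sum_prod_type']
  exact (unitsChineseRemainder hco).toEquiv.sum_comp fun p ↦ f p.1 * g p.2

end ZMod

/-- Twisted multiplicativity: for coprime `c₁, c₂`,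
`S(n,m;c₁c₂) = S(n·c̄₂, m·c̄₂; c₁)·S(n·c̄₁, m·c̄₁; c₂)` where `c̄₂` inverts `c₂` mod `c₁`
and `c̄₁` inverts `c₁` mod `c₂`. -/
theorem stmt4 (c₁ c₂ : ℕ) [NeZero c₁] [NeZero c₂] (hco : Nat.Coprime c₁ c₂)
    (n m c1bar c2bar : ℤ)
    (h1 : (c₂ : ℤ) ∣ (c₁ * c1bar - 1)) (h2 : (c₁ : ℤ) ∣ (c₂ * c2bar - 1)) :
    kloos (c₁ * c₂) n m
      = kloos c₁ (n * c2bar) (m * c2bar) * kloos c₂ (n * c1bar) (m * c1bar) := by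
  rw [kloos, kloos, kloos, ← ZMod.sum_units_mul_eq_sum_mul_sum hco]
  refine sum_congr rfl fun h _ ↦ ?_
  rw [eZMod_mul_eq_mul_eZMod c₁ c₂ c1bar c2bar h1 h2, ← Prod.fst_inv, ← Prod.snd_inv, ← map_inv]
  simp only [ZMod.coe_unitsChineseRemainder_fst, ZMod.coe_unitsChineseRemainder_snd,
    ZMod.cast_add (dvd_mul_right c₁ c₂), ZMod.cast_add (dvd_mul_left c₂ c₁),
    ZMod.cast_mul (dvd_mul_right c₁ c₂), ZMod.cast_mul (dvd_mul_left c₂ c₁),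
    ZMod.cast_intCast (dvd_mul_right c₁ c₂), ZMod.cast_intCast (dvd_mul_left c₂ c₁), Int.cast_mul]
  congr 2 <;> ring
end

section
/- Kloosterman sum with one argument divisible by the modulus: if q is prime, gcd(c, q) = 1 and gcd(cr/l, q) = 1, then S(n, q·h·r; q·c·r/l) = S(n·q̄, h·r; c·r/l) · S(0, n; q), where q̄ is an inverse of q modulo cr/l, S(0, n; q) is the Ramanujan sum. -/
/-!
Write `c' = cr/l` and `q q̄ - 1 = c' k`, so that `(-k) c' + q̄ q = 1`. By the Chinese remainder
theorem for `(ZMod (q c'))ˣ`, the additive character mod `q c'` splits as a character mod `q`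
twisted by `-k` times one mod `c'` twisted by `q̄`, so that
`S(n, m; q c') = S(-k n, -k m; q) · S(q̄ n, q̄ m; c')`. For `m = q h r` the first factor has
second argument `≡ 0 (mod q)`, hence is a Ramanujan sum, which does not change when `n` is
multiplied by the unit `-k`; in the second factor `q̄ q h r ≡ h r (mod c')`.
-/

open Complex Finset

lemma ZMod.intCast_mul_natCast_eq_one {q c : ℕ} {u v : ℤ} (huv : u * c + v * q = 1) :
    (u : ZMod q) * c = 1 := by
  simpa using congrArg ((↑) : ℤ → ZMod q) huv

lemma eZMod_eq_stdAddChar (c : ℕ) [NeZero c] (x : ZMod c) : eZMod c x = ZMod.stdAddChar x := by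
  rw [ZMod.stdAddChar_apply, ZMod.toCircle_apply, eZMod, e]
  congr 1
  push_cast
  ring

lemma eZMod_intCast_s5 (c : ℕ) [NeZero c] (m : ℤ) :
    eZMod c m = Complex.exp (2 * Real.pi * Complex.I * m / c) := by
  rw [eZMod_eq_stdAddChar, ZMod.stdAddChar_coe]

lemma eZMod_mul_of_bezout {q c : ℕ} [NeZero q] [NeZero c] {u v : ℤ} (huv : u * c + v * q = 1)
    (x : ZMod (q * c)) :
    eZMod (q * c) x
      = eZMod q (u * ZMod.castHom (dvd_mul_right q c) (ZMod q) x)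
        * eZMod c (v * ZMod.castHom (dvd_mul_left c q) (ZMod c) x) := by
  obtain ⟨m, rfl⟩ := ZMod.intCast_surjective x
  simp only [map_intCast, ← Int.cast_mul, eZMod_intCast_s5, ← Complex.exp_add]
  congr 1
  have hq : (q : ℂ) ≠ 0 := Nat.cast_ne_zero.2 (NeZero.ne q)
  have hc : (c : ℂ) ≠ 0 := Nat.cast_ne_zero.2 (NeZero.ne c)
  have huv' : (u : ℂ) * c + v * q = 1 := by exact_mod_cast huv
  push_cast
  field_simp
  linear_combination (-m) * huv'

def ZMod.unitsEquivProd {q c : ℕ} (h : q.Coprime c) :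
    (ZMod (q * c))ˣ ≃* (ZMod q)ˣ × (ZMod c)ˣ :=
  (Units.mapEquiv (ZMod.chineseRemainder h).toMulEquiv).trans MulEquiv.prodUnits

lemma ZMod.unitsEquivProd_fst {q c : ℕ} (h : q.Coprime c) (t : (ZMod (q * c))ˣ) :
    ((ZMod.unitsEquivProd h t).1 : ZMod q) = ZMod.castHom (dvd_mul_right q c) (ZMod q) t := by
  simp [ZMod.unitsEquivProd, MulEquiv.prodUnits, ZMod.chineseRemainder, ZMod.castHom_apply]

lemma ZMod.unitsEquivProd_snd {q c : ℕ} (h : q.Coprime c) (t : (ZMod (q * c))ˣ) :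
    ((ZMod.unitsEquivProd h t).2 : ZMod c) = ZMod.castHom (dvd_mul_left c q) (ZMod c) t := by
  simp [ZMod.unitsEquivProd, MulEquiv.prodUnits, ZMod.chineseRemainder, ZMod.castHom_apply]

/-- Twisted multiplicativity: `u` inverts `c` modulo `q` and `v` inverts `q` modulo `c`. -/
theorem kloos_mul_of_bezout {q c : ℕ} [NeZero q] [NeZero c] {u v : ℤ} (huv : u * c + v * q = 1)
    (n m : ℤ) :
    kloos (q * c) n m = kloos q (u * n) (u * m) * kloos c (v * n) (v * m) := by
  have hqc : q.Coprime c :=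
    Nat.isCoprime_iff_coprime.1 ⟨v, u, by rw [← huv]; ring⟩
  rw [kloos, kloos, kloos, Finset.sum_mul_sum, ← Finset.sum_product', Finset.univ_product_univ]
  refine Fintype.sum_equiv (ZMod.unitsEquivProd hqc).toEquiv _ _ fun t ↦ ?_
  rw [eZMod_mul_of_bezout huv]
  simp only [MulEquiv.toEquiv_eq_coe, MulEquiv.coe_toEquiv, map_add, map_mul, map_intCast,
    ← ZMod.unitsEquivProd_fst hqc, ← ZMod.unitsEquivProd_snd hqc, map_inv, Prod.fst_inv,
    Prod.snd_inv, Int.cast_mul]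
  congr 2 <;> ring

lemma kloos_congr {c : ℕ} [NeZero c] {n n' m m' : ℤ} (hn : (n : ZMod c) = n')
    (hm : (m : ZMod c) = m') : kloos c n m = kloos c n' m' := by
  rw [kloos, kloos, hn, hm]

lemma kloos_comm (c : ℕ) [NeZero c] (n m : ℤ) : kloos c n m = kloos c m n :=
  Fintype.sum_equiv (Equiv.inv _) _ _ fun t ↦ by rw [Equiv.inv_apply, inv_inv, add_comm]

lemma kloos_mul_left_eq_mul_right {c : ℕ} [NeZero c] {a : ℤ} (ha : IsUnit (a : ZMod c))
    (n m : ℤ) : kloos c (a * n) m = kloos c n (a * m) := by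
  refine Fintype.sum_equiv (Equiv.mulLeft ha.unit) _ _ fun t ↦ ?_
  simp only [Equiv.coe_mulLeft, mul_inv_rev, Units.val_mul, IsUnit.unit_spec, Int.cast_mul]
  congr 1
  linear_combination (-(m : ZMod c) * ((t⁻¹ : (ZMod c)ˣ) : ZMod c)) * ha.mul_val_inv

theorem stmt5_general (q c r l : ℕ) [Fact q.Prime] [NeZero (c * r / l)]
    (n h qbar : ℤ) (hqbar : ((c * r / l : ℕ) : ℤ) ∣ (q * qbar - 1)) :
    kloos (q * (c * r / l)) n (q * h * r)
      = kloos (c * r / l) (n * qbar) (h * r) * kloos q 0 n := by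
  set c' := c * r / l
  obtain ⟨k, hk⟩ := hqbar
  have huv : -k * c' + qbar * q = 1 := by linear_combination hk
  have hk_unit : IsUnit ((-k : ℤ) : ZMod q) :=
    .of_mul_eq_one _ (ZMod.intCast_mul_natCast_eq_one huv)
  have hqbar_inv : (qbar : ZMod c') * q = 1 :=
    ZMod.intCast_mul_natCast_eq_one (v := -k) (by linear_combination huv)
  rw [kloos_mul_of_bezout huv, mul_comm]
  congr 1
  · refine kloos_congr (by push_cast; ring) ?_
    push_cast
    linear_combination (h * r : ZMod c') * hqbar_inv
  · rw [kloos_congr rfl (m' := 0) (by simp), kloos_mul_left_eq_mul_right hk_unit, mul_zero,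
      kloos_comm]

/-- If `q` is prime, `gcd(c,q) = 1` and `gcd(cr/l, q) = 1` (with `l ∣ cr`), then
`S(n, qhr; q·cr/l) = S(n·q̄, hr; cr/l) · S(0, n; q)` where `q̄` inverts `q` mod `cr/l`. -/
theorem stmt5 (q c r l : ℕ) [Fact q.Prime] [NeZero (c * r / l)]
    (hl : l ∣ c * r) (hl0 : 0 < l)
    (hcq : Nat.Coprime c q) (hco : Nat.Coprime (c * r / l) q)
    (n h qbar : ℤ) (hqbar : ((c * r / l : ℕ) : ℤ) ∣ (q * qbar - 1)) :
    kloos (q * (c * r / l)) n (q * h * r)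
      = kloos (c * r / l) (n * qbar) (h * r) * kloos q 0 n :=
  stmt5_general q c r l n h qbar hqbar
end
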